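/- For every ε > 0 there exists M ≥ 1 such that for all real x, y with x > 0 and y − x > M, one has |Arccosh(e^y − e^x) − y − log 2| < ε. (In particular, F(x,y) = Arccosh(e^y − e^x) is asymptotically linear on the cone {(x,y) : 0 < x < y}, approximated by the linear function y with R(x,y) = y − x.) -/

import Mathlib

open Real

/-- Inverse hyperbolic cosine: `Arccosh w = log (w + √(w² − 1))` for `w ≥ 1`. -/
noncomputable def arccosh (w : ℝ) : ℝ := Real.log (w + Real.sqrt (w ^ 2 - 1))

/-! With `w = e^y − e^x = e^y (1 − t)`, `t = e^(x−y)`, the error splits as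
`(arccosh w − log (2w)) + log (1 − t)`. The first term is `O(1/w²)` because
`w − √(w² − 1) = 1/(w + √(w² − 1))`, the second is `O(t)`, and both are `O(e^(x−y))`. -/

lemma log_sub_log_le_sub_div {a b : ℝ} (ha : 0 < a) (hb : 0 < b) :
    log b - log a ≤ (b - a) / a := by
  rw [← log_div hb.ne' ha.ne']
  calc log (b / a) ≤ b / a - 1 := log_le_sub_one_of_pos (by positivity)
    _ = (b - a) / a := by field_simp

lemma abs_log_one_sub_le {t : ℝ} (ht₀ : 0 ≤ t) (ht : t ≤ 1 / 2) : |log (1 - t)| ≤ 2 * t := by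
  have hpos : 0 < 1 - t := by linarith
  have hlower : log 1 - log (1 - t) ≤ t / (1 - t) := by
    simpa using log_sub_log_le_sub_div hpos one_pos
  have htdiv : t / (1 - t) ≤ 2 * t := by
    rw [div_le_iff₀ hpos]; nlinarith
  rw [abs_of_nonpos (log_nonpos hpos.le (by linarith)), log_one] at *
  linarith

lemma abs_arccosh_sub_log_two_mul_le {w : ℝ} (hw : 1 ≤ w) :
    |arccosh w - log (2 * w)| ≤ 1 / w ^ 2 := by
  set s := √(w ^ 2 - 1)
  have hs₀ : 0 ≤ s := sqrt_nonneg _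
  have hs_sq : s ^ 2 = w ^ 2 - 1 := sq_sqrt (by nlinarith)
  have hs_le : s ≤ w := by nlinarith
  have hconj : (w - s) * (w + s) = 1 := by linear_combination -hs_sq
  have hle : arccosh w ≤ log (2 * w) := log_le_log (by linarith) (by linarith)
  have hgap : log (2 * w) - arccosh w ≤ 1 / w ^ 2 :=
    calc log (2 * w) - arccosh w ≤ (2 * w - (w + s)) / (w + s) :=
          log_sub_log_le_sub_div (by linarith) (by linarith)
      _ = 1 / (w + s) ^ 2 := by field_simp; linear_combination hconj
      _ ≤ 1 / w ^ 2 := by gcongr; linarith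
  rw [abs_of_nonpos (by linarith)]
  linarith

lemma log_exp_sub_exp {x y : ℝ} (hxy : x < y) :
    log (exp y - exp x) = y + log (1 - exp (x - y)) := by
  have hexp : exp y - exp x = exp y * (1 - exp (x - y)) := by
    rw [mul_sub, ← exp_add]; ring_nf
  have hpos : 0 < 1 - exp (x - y) := by
    rw [sub_pos, exp_lt_one_iff]; linarith
  rw [hexp, log_mul (exp_ne_zero y) hpos.ne', log_exp]

lemma abs_arccosh_exp_sub_exp_sub_le {x y : ℝ} (hx : 0 ≤ x) (hxy : 2 * exp x ≤ exp y) :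
    |arccosh (exp y - exp x) - y - log 2| ≤ 6 * exp (x - y) := by
  set t := exp (x - y)
  set w := exp y - exp x
  have hx_lt_y : x < y := exp_lt_exp.mp (by linarith [exp_pos x])
  have ht_mul : t * exp y = exp x := by rw [← exp_add]; ring_nf
  have ht_half : t ≤ 1 / 2 := by nlinarith [exp_pos y]
  have hw_ge : exp x ≤ w := by linarith
  have hw_one : 1 ≤ w := (one_le_exp hx).trans hw_ge
  have hsplit : arccosh w - y - log 2 = (arccosh w - log (2 * w)) + log (1 - t) := by
    rw [log_mul two_ne_zero (by linarith), log_exp_sub_exp hx_lt_y]; ring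
  -- `4 t w² = 2w · 2tw ≥ 2w · t e^y = 2w e^x ≥ 2 (e^x)² ≥ 1`
  have hw_sq : 1 / w ^ 2 ≤ 4 * t := by
    have htw : exp x ≤ 2 * t * w := by nlinarith [exp_pos (x - y)]
    rw [div_le_iff₀ (by positivity)]
    nlinarith [one_le_exp hx]
  calc |arccosh w - y - log 2|
      ≤ |arccosh w - log (2 * w)| + |log (1 - t)| := hsplit ▸ abs_add_le _ _
    _ ≤ 1 / w ^ 2 + 2 * t :=
        add_le_add (abs_arccosh_sub_log_two_mul_le hw_one) (abs_log_one_sub_le (exp_pos _).le ht_half)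
    _ ≤ 6 * t := by linarith

/-- `F(x,y) = Arccosh(e^y − e^x)` is asymptotically linear (≈ `y + log 2`) on the cone
`{0 < x < y}`, uniformly as `y − x → ∞`. -/
theorem stmt_17 :
    ∀ ε > (0 : ℝ), ∃ M : ℝ, 1 ≤ M ∧
      ∀ x y : ℝ, 0 < x → y - x > M →
        |arccosh (Real.exp y - Real.exp x) - y - Real.log 2| < ε := by
  intro ε hε
  refine ⟨max 1 (log (6 / ε)), le_max_left _ _, fun x y hx hM => ?_⟩
  have hgap_one : 1 < y - x := (le_max_left _ _).trans_lt hM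
  have hgap_log : log (6 / ε) < y - x := (le_max_right _ _).trans_lt hM
  have hdouble : 2 * exp x ≤ exp y := by
    have h2 : 2 ≤ exp (y - x) := by linarith [add_one_le_exp 1, exp_lt_exp.mpr hgap_one]
    rw [exp_sub, le_div_iff₀ (exp_pos x)] at h2
    linarith
  have hsmall : 6 * exp (x - y) < ε := by
    have h : exp (x - y) < exp (-log (6 / ε)) := exp_lt_exp.mpr (by linarith)
    rw [exp_neg, exp_log (by positivity), inv_div] at h
    linarith
  exact (abs_arccosh_exp_sub_exp_sub_le hx.le hdouble).trans_lt hsmall
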